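/- Let σ, ρ, β be positive real numbers and let x, y, z : ℝ → ℝ be differentiable functions satisfying the Lorenz equations x'(t) = σ(y(t) − x(t)), y'(t) = x(t)(ρ − z(t)) − y(t), z'(t) = x(t)y(t) − βz(t) for all t ≥ 0. Then the trajectory is bounded forward in time: there exists a real constant C such that x(t)² + y(t)² + z(t)² ≤ C for all t ≥ 0. -/

import Mathlib

/-!
Take `V = ρ x² + σ y² + σ (z - 2ρ)²`. Along the flow the cubic terms `xyz` cancel, and the shift
`2ρ` is chosen so that the `xy` terms cancel too, leaving `V̇ = -2σ (ρ x² + y² + β z² - 2ρβ z)`.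
This is at most `K - c V` for some `c, K > 0`, so `V̇ < 0` at every level above
`max (V 0) (K / c)` and `V` can never cross such a level. Finally `V` controls `x² + y² + z²`.
-/

theorem exists_forall_le_of_deriv_le_sub_mul {f f' : ℝ → ℝ} {c K : ℝ} (hc : 0 < c)
    (hf : ∀ t, 0 ≤ t → HasDerivAt f (f' t) t) (hf' : ∀ t, 0 ≤ t → f' t ≤ K - c * f t) :
    ∃ M, ∀ t, 0 ≤ t → f t ≤ M := by
  set M := max (f 0) (K / c) + 1
  refine ⟨M, fun t ht => ?_⟩
  have hKM : K < c * M :=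
    (div_lt_iff₀' hc).1 (by simp only [M]; linarith [le_max_right (f 0) (K / c)])
  refine image_le_of_deriv_right_lt_deriv_boundary (a := 0) (b := t) (B := fun _ => M)
    (fun s hs => (hf s hs.1).continuousAt.continuousWithinAt)
    (fun s hs => (hf s hs.1).hasDerivWithinAt) ?_ (fun _ => hasDerivAt_const _ M) ?_ ⟨ht, le_rfl⟩
  · simp only [M]; linarith [le_max_left (f 0) (K / c)]
  · intro s hs hfs
    have hf's := hf' s hs.1
    rw [hfs] at hf's
    linarith

def lorenzLyapunov (σ ρ x y z : ℝ) : ℝ :=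
  ρ * x ^ 2 + σ * y ^ 2 + σ * (z - 2 * ρ) ^ 2

theorem HasDerivAt.lorenzLyapunov {σ ρ : ℝ} {x y z : ℝ → ℝ} {x' y' z' t : ℝ}
    (hx : HasDerivAt x x' t) (hy : HasDerivAt y y' t) (hz : HasDerivAt z z' t) :
    HasDerivAt (fun s => lorenzLyapunov σ ρ (x s) (y s) (z s))
      (2 * ρ * x t * x' + 2 * σ * y t * y' + 2 * σ * (z t - 2 * ρ) * z') t := by
  unfold _root_.lorenzLyapunov
  refine ((((hx.fun_pow 2).const_mul ρ).fun_add ((hy.fun_pow 2).const_mul σ)).fun_add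
    (((hz.sub_const (2 * ρ)).fun_pow 2).const_mul σ)).congr_deriv ?_
  norm_num
  ring

theorem lorenzLyapunov_deriv_le {σ ρ β c : ℝ} (hσ : 0 ≤ σ) (hρ : 0 ≤ ρ) (hc : 0 ≤ c)
    (hcσ : c ≤ 2 * σ) (hc2 : c ≤ 2) (hcβ : c ≤ β) (a b d : ℝ) :
    2 * ρ * a * (σ * (b - a)) + 2 * σ * b * (a * (ρ - d) - b)
        + 2 * σ * (d - 2 * ρ) * (a * b - β * d)
      ≤ 4 * σ * β * ρ ^ 2 - c * lorenzLyapunov σ ρ a b d := by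
  have cubic_cancel : 2 * ρ * a * (σ * (b - a)) + 2 * σ * b * (a * (ρ - d) - b)
      + 2 * σ * (d - 2 * ρ) * (a * b - β * d)
        = -2 * σ * (ρ * a ^ 2 + b ^ 2 + β * d ^ 2 - 2 * ρ * β * d) := by ring
  rw [cubic_cancel, lorenzLyapunov]
  nlinarith [mul_nonneg (mul_nonneg hρ (sub_nonneg.2 hcσ)) (sq_nonneg a),
    mul_nonneg (mul_nonneg hσ (sub_nonneg.2 hc2)) (sq_nonneg b),
    mul_nonneg (mul_nonneg hσ (sub_nonneg.2 hcβ)) (sq_nonneg (d - ρ)),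
    mul_nonneg (mul_nonneg hσ (sub_nonneg.2 hcβ)) (sq_nonneg ρ),
    mul_nonneg (mul_nonneg hc hσ) (sq_nonneg d)]

theorem sq_add_sq_add_sq_le_lorenzLyapunov {σ ρ m : ℝ} (hm : 0 < m) (hmρ : m ≤ ρ) (hmσ : m ≤ σ)
    (a b d : ℝ) : a ^ 2 + b ^ 2 + d ^ 2 ≤ 2 * lorenzLyapunov σ ρ a b d / m + 8 * ρ ^ 2 := by
  have hz : d ^ 2 ≤ 2 * (d - 2 * ρ) ^ 2 + 8 * ρ ^ 2 := by nlinarith [sq_nonneg (d - 4 * ρ)]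
  have hV : m * (a ^ 2 + b ^ 2 + (d - 2 * ρ) ^ 2) ≤ lorenzLyapunov σ ρ a b d := by
    rw [lorenzLyapunov]
    nlinarith [mul_le_mul_of_nonneg_right hmρ (sq_nonneg a),
      mul_le_mul_of_nonneg_right hmσ (sq_nonneg b),
      mul_le_mul_of_nonneg_right hmσ (sq_nonneg (d - 2 * ρ))]
  have hV' : 2 * (a ^ 2 + b ^ 2 + (d - 2 * ρ) ^ 2) ≤ 2 * lorenzLyapunov σ ρ a b d / m := by
    rw [le_div_iff₀ hm]; linarith
  linarith [sq_nonneg a, sq_nonneg b]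

/-- For positive parameters `σ, ρ, β`, every differentiable solution
`(x, y, z)` of the Lorenz system `ẋ = σ(y − x)`, `ẏ = x(ρ − z) − y`,
`ż = xy − βz` on `t ≥ 0` is bounded forward in time: there is a constant `C`
with `x(t)² + y(t)² + z(t)² ≤ C` for all `t ≥ 0`. -/
theorem lorenz_bounded_forward (σ ρ β : ℝ) (hσ : 0 < σ) (hρ : 0 < ρ)
    (hβ : 0 < β) (x y z : ℝ → ℝ)
    (hx : Differentiable ℝ x) (hy : Differentiable ℝ y)
    (hz : Differentiable ℝ z)
    (hx' : ∀ t, 0 ≤ t → deriv x t = σ * (y t - x t))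
    (hy' : ∀ t, 0 ≤ t → deriv y t = x t * (ρ - z t) - y t)
    (hz' : ∀ t, 0 ≤ t → deriv z t = x t * y t - β * z t) :
    ∃ C : ℝ, ∀ t, 0 ≤ t → x t ^ 2 + y t ^ 2 + z t ^ 2 ≤ C := by
  set c := min (2 * σ) (min 2 β)
  have hc : 0 < c := lt_min (by positivity) (lt_min two_pos hβ)
  have hcσ : c ≤ 2 * σ := min_le_left _ _
  have hc2 : c ≤ 2 := (min_le_right _ _).trans (min_le_left _ _)
  have hcβ : c ≤ β := (min_le_right _ _).trans (min_le_right _ _)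
  obtain ⟨M, hM⟩ := exists_forall_le_of_deriv_le_sub_mul hc
    (fun t _ => (hx t).hasDerivAt.lorenzLyapunov (hy t).hasDerivAt (hz t).hasDerivAt)
    (fun t ht => by
      rw [hx' t ht, hy' t ht, hz' t ht]
      exact lorenzLyapunov_deriv_le hσ.le hρ.le hc.le hcσ hc2 hcβ _ _ _)
  have hm : 0 < min ρ σ := lt_min hρ hσ
  refine ⟨2 * M / min ρ σ + 8 * ρ ^ 2, fun t ht => ?_⟩
  calc x t ^ 2 + y t ^ 2 + z t ^ 2
      ≤ 2 * lorenzLyapunov σ ρ (x t) (y t) (z t) / min ρ σ + 8 * ρ ^ 2 :=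
        sq_add_sq_add_sq_le_lorenzLyapunov hm (min_le_left _ _) (min_le_right _ _) _ _ _
    _ ≤ 2 * M / min ρ σ + 8 * ρ ^ 2 := by gcongr; exact hM t ht
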